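/- Let X_n be an n×n random matrix from SGRM(n, 1/n) (the Gaussian Unitary Ensemble normalized so that E{tr_n(X_n²)} → 1). For every k ∈ ℕ there is a constant C(k) < ∞, independent of n, such that E{‖X_n‖^k} ≤ C(k), where ‖·‖ is the operator norm. In particular one can take C(k) = 4^k + k·∫₀^∞ (4+t)^{k−1} e^{−t²/2} dt, given the tail bound P(‖X_n‖ > 2+ε) ≤ 2n·exp(−nε²/2) for all ε > 0. -/

import Mathlib

/-!
The lower Lebesgue integral `∫⁻` of the possibly non-measurable function `‖X‖ ^ k` is attained by a
measurable minorant `Y`, whose superlevel sets lie inside those of `‖X‖`. The layer-cake formula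
`E Y^k = k ∫₀^∞ P(Y > t) t^(k-1) dt` then gives the bound: on `(0, 4]` we use `P ≤ 1`, and for
`t > 4` the hypothesis at `ε = t - 2`, since `2n e^(-n(t-2)²/2) ≤ e^(-(t-4)²/2)` when `n ≥ 1`.
-/

open Matrix MeasureTheory
open scoped ENNReal

noncomputable def matOpNorm {n : ℕ} (a : Matrix (Fin n) (Fin n) ℂ) : ℝ :=
  ‖Matrix.toEuclideanCLM (𝕜 := ℂ) a‖

open Set

theorem integrable_const_add_pow_mul_exp_neg_sq_div_two (c : ℝ) (m : ℕ) :
    Integrable fun x : ℝ => (c + x) ^ m * Real.exp (-x ^ 2 / 2) := by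
  have hmonomial (j : ℕ) : Integrable fun x : ℝ => x ^ j * Real.exp (-x ^ 2 / 2) := by
    refine (integrable_rpow_mul_exp_neg_mul_sq one_half_pos
      (by linarith [(Nat.cast_nonneg j : (0 : ℝ) ≤ j)] : (-1 : ℝ) < j)).congr
      (ae_of_all _ fun x => ?_)
    simp only [Real.rpow_natCast]
    ring_nf
  refine (integrable_finsetSum (Finset.range (m + 1)) fun i _ =>
    (hmonomial (m - i)).const_mul (c ^ i * m.choose i)).congr (ae_of_all _ fun x => ?_)
  simp only [add_pow, Finset.sum_mul]
  exact Finset.sum_congr rfl fun i _ => by ring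

theorem setLIntegral_Ioc_ofReal_rpow_sub_one {a p : ℝ} (ha : 0 ≤ a) (hp : 0 < p) :
    ∫⁻ t in Ioc 0 a, ENNReal.ofReal (t ^ (p - 1)) = ENNReal.ofReal (a ^ p / p) := by
  have hint : IntervalIntegrable (fun t : ℝ => t ^ (p - 1)) volume 0 a :=
    intervalIntegral.intervalIntegrable_rpow' (by linarith)
  rw [← ofReal_integral_eq_lintegral_ofReal
      ((intervalIntegrable_iff_integrableOn_Ioc_of_le ha).1 hint)
      ((ae_restrict_iff' measurableSet_Ioc).2 (ae_of_all _ fun t ht => Real.rpow_nonneg ht.1.le _)),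
    ← intervalIntegral.integral_of_le ha, integral_rpow (Or.inl (by linarith)), sub_add_cancel,
    Real.zero_rpow hp.ne', sub_zero]

theorem exists_measurable_le_lintegral_ofReal_rpow_eq {Ω : Type*} [MeasurableSpace Ω]
    (μ : Measure Ω) {f : Ω → ℝ} (hf : 0 ≤ f) {p : ℝ} (hp : 0 < p) :
    ∃ Y : Ω → ℝ, Measurable Y ∧ 0 ≤ Y ∧ Y ≤ f ∧
      ∫⁻ ω, ENNReal.ofReal (f ω ^ p) ∂μ = ∫⁻ ω, ENNReal.ofReal (Y ω ^ p) ∂μ := by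
  obtain ⟨g, hg, hgf, hfg⟩ :=
    exists_measurable_le_lintegral_eq μ fun ω => ENNReal.ofReal (f ω ^ p)
  have hg_eq (ω : Ω) : ENNReal.ofReal (((g ω).toReal ^ p⁻¹) ^ p) = g ω := by
    rw [Real.rpow_inv_rpow ENNReal.toReal_nonneg hp.ne',
      ENNReal.ofReal_toReal (ne_top_of_le_ne_top ENNReal.ofReal_ne_top (hgf ω))]
  refine ⟨fun ω => (g ω).toReal ^ p⁻¹, hg.ennreal_toReal.pow_const _,
    fun ω => Real.rpow_nonneg ENNReal.toReal_nonneg _, fun ω => ?_, by simp_rw [hg_eq]; exact hfg⟩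
  rw [← Real.rpow_le_rpow_iff (Real.rpow_nonneg ENNReal.toReal_nonneg _) (hf ω) hp,
    ← ENNReal.ofReal_le_ofReal_iff (Real.rpow_nonneg (hf ω) _), hg_eq]
  exact hgf ω

section Tail

variable {Ω : Type*} [MeasurableSpace Ω] {μ : Measure Ω} [IsProbabilityMeasure μ]
  {p a : ℝ} {G : ℝ → ℝ≥0∞}

theorem lintegral_ofReal_rpow_le_of_tail_of_measurable {Y : Ω → ℝ} (hY : Measurable Y)
    (hY0 : 0 ≤ Y) (hp : 0 < p) (ha : 0 ≤ a)
    (htail : ∀ t, a < t → μ {ω | t < Y ω} ≤ G (t - a)) :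
    ∫⁻ ω, ENNReal.ofReal (Y ω ^ p) ∂μ ≤
      ENNReal.ofReal (a ^ p) +
        ENNReal.ofReal p * ∫⁻ t in Ioi 0, ENNReal.ofReal ((a + t) ^ (p - 1)) * G t := by
  conv_lhs => rw [lintegral_rpow_eq_lintegral_meas_lt_mul μ (ae_of_all _ hY0) hY.aemeasurable hp,
    ← Ioc_union_Ioi_eq_Ioi ha, lintegral_union measurableSet_Ioi (Ioc_disjoint_Ioi le_rfl), mul_add]
  gcongr ?_ + ENNReal.ofReal p * ?_
  · calc ENNReal.ofReal p * ∫⁻ t in Ioc 0 a, μ {ω | t < Y ω} * ENNReal.ofReal (t ^ (p - 1))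
        ≤ ENNReal.ofReal p * ∫⁻ t in Ioc 0 a, ENNReal.ofReal (t ^ (p - 1)) := by
          gcongr with t
          exact mul_le_of_le_one_left zero_le prob_le_one
      _ = ENNReal.ofReal (a ^ p) := by
          rw [setLIntegral_Ioc_ofReal_rpow_sub_one ha hp, ← ENNReal.ofReal_mul hp.le,
            mul_div_cancel₀ _ hp.ne']
  · calc ∫⁻ t in Ioi a, μ {ω | t < Y ω} * ENNReal.ofReal (t ^ (p - 1))
        ≤ ∫⁻ t in Ioi a, G (t - a) * ENNReal.ofReal (t ^ (p - 1)) :=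
          setLIntegral_mono' measurableSet_Ioi fun t ht => by gcongr; exact htail t ht
      _ = ∫⁻ t in Ioi 0, ENNReal.ofReal ((a + t) ^ (p - 1)) * G t := by
          rw [← (measurePreserving_add_left volume a).setLIntegral_comp_preimage_emb
            (measurableEmbedding_addLeft a), preimage_const_add_Ioi, sub_self]
          simp only [add_sub_cancel_left, mul_comm]

theorem lintegral_ofReal_rpow_le_of_tail {f : Ω → ℝ} (hf : 0 ≤ f) (hp : 0 < p) (ha : 0 ≤ a)
    (htail : ∀ t, a < t → μ {ω | t < f ω} ≤ G (t - a)) :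
    ∫⁻ ω, ENNReal.ofReal (f ω ^ p) ∂μ ≤
      ENNReal.ofReal (a ^ p) +
        ENNReal.ofReal p * ∫⁻ t in Ioi 0, ENNReal.ofReal ((a + t) ^ (p - 1)) * G t := by
  obtain ⟨Y, hY, hY0, hYf, hfY⟩ := exists_measurable_le_lintegral_ofReal_rpow_eq μ hf hp
  rw [hfY]
  exact lintegral_ofReal_rpow_le_of_tail_of_measurable hY hY0 hp ha fun t ht =>
    (measure_mono fun ω (hω : t < Y ω) => hω.trans_le (hYf ω)).trans (htail t ht)

end Tail

theorem two_mul_mul_exp_neg_le {n t : ℝ} (hn : 1 ≤ n) (ht : 4 < t) :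
    2 * n * Real.exp (-n * (t - 2) ^ 2 / 2) ≤ Real.exp (-(t - 4) ^ 2 / 2) := by
  calc 2 * n * Real.exp (-n * (t - 2) ^ 2 / 2)
      ≤ Real.exp (2 * n - 1) * Real.exp (-n * (t - 2) ^ 2 / 2) := by
        gcongr
        linarith [Real.add_one_le_exp (2 * n - 1)]
    _ = Real.exp (2 * n - 1 - n * (t - 2) ^ 2 / 2) := by rw [← Real.exp_add]; ring_nf
    _ ≤ Real.exp (-(t - 4) ^ 2 / 2) := by
        gcongr
        -- `n (t - 2)² - (t - 4)² = (n - 1) (t - 2)² + 4t - 12 ≥ 4n - 2` as `t > 4`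
        nlinarith [mul_le_mul_of_nonneg_left (sq_nonneg (t - 2)) (sub_nonneg.2 hn)]

/-- If `X_n` is an `n × n` self-adjoint Gaussian random matrix
satisfying the tail bound `P(‖X_n‖ > 2 + ε) ≤ 2n e^{−nε²/2}` for all `ε > 0`, then for
every `k` one has `E‖X_n‖^k ≤ C(k)`, where the constant
`C(k) = 4^k + k ∫₀^∞ (4+t)^{k−1} e^{−t²/2} dt` is independent of `n`. -/
theorem expectation_opNorm_pow_le {Ω : Type*} [MeasureSpace Ω]
    [IsProbabilityMeasure (volume : Measure Ω)]
    (k : ℕ) :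
    ∃ C : ℝ, C = 4 ^ k + k * ∫ t in Set.Ioi (0 : ℝ), (4 + t) ^ (k - 1) * Real.exp (-t ^ 2 / 2) ∧
      ∀ (n : ℕ), 1 ≤ n → ∀ X : Ω → Matrix (Fin n) (Fin n) ℂ,
        (∀ ω, IsSelfAdjoint (X ω)) →
        (∀ ε : ℝ, 0 < ε →
          (volume {ω | 2 + ε < matOpNorm (X ω)}).toReal ≤
            2 * n * Real.exp (-(n : ℝ) * ε ^ 2 / 2)) →
        ∫⁻ ω, ENNReal.ofReal (matOpNorm (X ω) ^ k) ≤ ENNReal.ofReal C := by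
  refine ⟨_, rfl, fun n hn X _ htail => ?_⟩
  rcases Nat.eq_zero_or_pos k with rfl | hk
  · simp
  have hG (t : ℝ) (ht : 4 < t) :
      volume {ω | t < matOpNorm (X ω)} ≤ ENNReal.ofReal (Real.exp (-(t - 4) ^ 2 / 2)) := by
    have h := htail (t - 2) (by linarith)
    rw [add_sub_cancel] at h
    exact (ENNReal.le_ofReal_iff_toReal_le (measure_ne_top _ _) (Real.exp_nonneg _)).2
      (h.trans (two_mul_mul_exp_neg_le (by exact_mod_cast hn) ht))
  have hmoment := lintegral_ofReal_rpow_le_of_tail (f := fun ω => matOpNorm (X ω)) (p := k)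
    (G := fun t => ENNReal.ofReal (Real.exp (-t ^ 2 / 2))) (fun ω => norm_nonneg _)
    (Nat.cast_pos.2 hk) zero_le_four hG
  have hI : 0 ≤ ∫ t in Ioi (0 : ℝ), (4 + t) ^ (k - 1) * Real.exp (-t ^ 2 / 2) :=
    setIntegral_nonneg measurableSet_Ioi fun t (ht : 0 < t) => by positivity
  simp only [Real.rpow_natCast, ← Nat.cast_pred hk, ← ENNReal.ofReal_mul' (Real.exp_nonneg _)]
    at hmoment
  rwa [← ofReal_integral_eq_lintegral_ofReal
      (integrable_const_add_pow_mul_exp_neg_sq_div_two 4 (k - 1)).integrableOn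
      ((ae_restrict_iff' measurableSet_Ioi).2 (ae_of_all _ fun t (ht : 0 < t) => by positivity)),
    ← ENNReal.ofReal_mul k.cast_nonneg,
    ← ENNReal.ofReal_add (by positivity) (mul_nonneg k.cast_nonneg hI)] at hmoment
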